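/- arXiv:2102.02073 — 2 statements merged into one kernel-verified Lean document; each statement's English description precedes it below -/
import Mathlib

section
/- (Exponential radial supersolution on the critical line p + q = m − 1 with p > 0; proof of Theorem 1.5 (E), case p > 0) Let m > 1, p > 0, q = m − 1 − p, ι > 0, η > 0, and define S(r) = ι·e^{ι r} and u(r) = e^{−η r}. Then the radial inequality (S·|u'|^{m−2}·u')'(r) + S(r)·u(r)^p·|u'(r)|^q ≤ 0 holds for all r ∈ ℝ if and only if ι ≥ η^{−p} + η·(m − 1). In particular, since the right-hand side is minimized at η = (p/(m−1))^{1/(p+1)} with minimal value H(p) = ((m−1)/p)^{p/(p+1)} + (m−1)·((m−1)/p)^{−1/(p+1)}, such an η exists whenever ι ≥ H(p). -/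
/-!
For `u = e^{-ηr}` and `S = A e^{ιr}` both terms of the radial operator are multiples of
`e^{(ι - η(m-1))r}`; on the critical line `p + q = m - 1` the coefficient is
`A η^{m-1} (η^{-p} + η(m-1) - ι)`, so the inequality holds everywhere iff it holds at `r = 0`,
iff `η^{-p} + η(m-1) ≤ ι`.

The function `η ↦ η^{-p} + cη` is minimised at the critical point `η₀`, `c η₀ = p η₀^{-p}`:
writing `η = η₀ t`, it equals `η₀^{-p} (t^{-p} + p t)`, and `t^{-p} + p t ≥ p + 1` is the weighted
AM–GM inequality with weights `1/(p+1)` and `p/(p+1)`.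
-/

open Real

noncomputable def radialFlux (S u : ℝ → ℝ) (m t : ℝ) : ℝ := S t * |deriv u t| ^ (m - 2) * deriv u t

lemma hasDerivAt_exp_const_mul (c r : ℝ) :
    HasDerivAt (fun t => exp (c * t)) (c * exp (c * r)) r := by
  simpa [mul_comm] using ((hasDerivAt_id r).const_mul c).exp

section ExponentialProfile

variable {m p q ι η A : ℝ} {S u : ℝ → ℝ}

lemma deriv_eq_of_eq_exp (hu : ∀ r, u r = exp (-η * r)) (r : ℝ) :
    deriv u r = -η * exp (-η * r) := by
  rw [funext hu]
  exact (hasDerivAt_exp_const_mul (-η) r).deriv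

lemma abs_deriv_eq_of_eq_exp (hη : 0 < η) (hu : ∀ r, u r = exp (-η * r)) (r : ℝ) :
    |deriv u r| = η * exp (-η * r) := by
  rw [deriv_eq_of_eq_exp hu, abs_mul, abs_neg, abs_of_pos hη, abs_of_pos (exp_pos _)]

lemma radialFlux_eq_of_eq_exp (hη : 0 < η) (hS : ∀ r, S r = A * exp (ι * r))
    (hu : ∀ r, u r = exp (-η * r)) :
    radialFlux S u m = fun t => -(A * η ^ (m - 1)) * exp ((ι - η * (m - 1)) * t) := by
  funext t
  rw [radialFlux, hS, abs_deriv_eq_of_eq_exp hη hu, deriv_eq_of_eq_exp hu,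
    mul_rpow hη.le (exp_pos _).le, ← exp_mul,
    show m - 1 = (m - 2) + 1 by ring, rpow_add_one hη.ne']
  have hexp : exp (ι * t) * exp (-η * t * (m - 2)) * exp (-η * t)
      = exp ((ι - η * (m - 2 + 1)) * t) := by
    rw [← exp_add, ← exp_add]; ring_nf
  linear_combination (-(A * (η ^ (m - 2) * η))) * hexp

lemma source_eq_of_eq_exp (hη : 0 < η) (hq : q = m - 1 - p) (hS : ∀ r, S r = A * exp (ι * r))
    (hu : ∀ r, u r = exp (-η * r)) (r : ℝ) :
    S r * u r ^ p * |deriv u r| ^ q = A * η ^ q * exp ((ι - η * (m - 1)) * r) := by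
  rw [hS, hu, abs_deriv_eq_of_eq_exp hη hu, mul_rpow hη.le (exp_pos _).le, ← exp_mul, ← exp_mul]
  have hexp : exp (ι * r) * exp (-η * r * p) * exp (-η * r * q)
      = exp ((ι - η * (m - 1)) * r) := by
    rw [← exp_add, ← exp_add, hq]; ring_nf
  linear_combination (A * η ^ q) * hexp

lemma hasDerivAt_radialFlux_of_eq_exp (hη : 0 < η) (hS : ∀ r, S r = A * exp (ι * r))
    (hu : ∀ r, u r = exp (-η * r)) (r : ℝ) :
    HasDerivAt (radialFlux S u m)
      (-(A * η ^ (m - 1)) * (ι - η * (m - 1)) * exp ((ι - η * (m - 1)) * r)) r := by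
  rw [radialFlux_eq_of_eq_exp hη hS hu, mul_assoc]
  exact (hasDerivAt_exp_const_mul _ r).const_mul _

lemma radial_operator_eq_of_eq_exp (hη : 0 < η) (hq : q = m - 1 - p)
    (hS : ∀ r, S r = A * exp (ι * r)) (hu : ∀ r, u r = exp (-η * r)) (r : ℝ) :
    deriv (radialFlux S u m) r + S r * u r ^ p * |deriv u r| ^ q
      = A * η ^ (m - 1) * (η ^ (-p) + η * (m - 1) - ι) * exp ((ι - η * (m - 1)) * r) := by
  rw [(hasDerivAt_radialFlux_of_eq_exp hη hS hu r).deriv, source_eq_of_eq_exp hη hq hS hu, hq,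
    show m - 1 - p = (m - 1) + -p by ring, rpow_add hη]
  ring

theorem radial_inequality_iff_of_eq_exp (hA : 0 < A) (hη : 0 < η) (hq : q = m - 1 - p)
    (hS : ∀ r, S r = A * exp (ι * r)) (hu : ∀ r, u r = exp (-η * r)) :
    (∀ r, DifferentiableAt ℝ (radialFlux S u m) r ∧
      deriv (radialFlux S u m) r + S r * u r ^ p * |deriv u r| ^ q ≤ 0) ↔
    η ^ (-p) + η * (m - 1) ≤ ι := by
  have hcoef : 0 < A * η ^ (m - 1) := by positivity
  constructor
  · intro h
    have h0 := (h 0).2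
    rw [radial_operator_eq_of_eq_exp hη hq hS hu, mul_zero, exp_zero, mul_one] at h0
    linarith [nonpos_of_mul_nonpos_right h0 hcoef]
  · intro h r
    refine ⟨(hasDerivAt_radialFlux_of_eq_exp hη hS hu r).differentiableAt, ?_⟩
    rw [radial_operator_eq_of_eq_exp hη hq hS hu]
    exact mul_nonpos_of_nonpos_of_nonneg
      (mul_nonpos_of_nonneg_of_nonpos hcoef.le (by linarith)) (exp_pos _).le

end ExponentialProfile

lemma add_one_le_rpow_neg_add_mul {p t : ℝ} (hp : 0 < p) (ht : 0 < t) :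
    p + 1 ≤ t ^ (-p) + p * t := by
  have hp1 : 0 < p + 1 := by linarith
  have amgm := geom_mean_le_arith_mean2_weighted (w₁ := 1 / (p + 1)) (w₂ := p / (p + 1))
    (p₁ := t ^ (-p)) (p₂ := t) (by positivity) (by positivity) (by positivity) ht.le
    (by field_simp; ring)
  have hgeom : (t ^ (-p)) ^ (1 / (p + 1)) * t ^ (p / (p + 1)) = 1 := by
    rw [← rpow_mul ht.le, ← rpow_add ht, show -p * (1 / (p + 1)) + p / (p + 1) = 0 by ring,
      rpow_zero]
  rwa [hgeom, show 1 / (p + 1) * t ^ (-p) + p / (p + 1) * t = (t ^ (-p) + p * t) / (p + 1) by ring,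
    le_div_iff₀ hp1, one_mul] at amgm

lemma rpow_neg_add_mul_le_of_mul_eq {p c x₀ y : ℝ} (hp : 0 < p) (hx₀ : 0 < x₀) (hy : 0 < y)
    (hc : x₀ * c = p * x₀ ^ (-p)) :
    x₀ ^ (-p) + x₀ * c ≤ y ^ (-p) + y * c := by
  obtain ⟨t, ht, rfl⟩ : ∃ t, 0 < t ∧ y = x₀ * t := ⟨y / x₀, by positivity, by field_simp⟩
  calc x₀ ^ (-p) + x₀ * c = x₀ ^ (-p) * (p + 1) := by rw [hc]; ring
    _ ≤ x₀ ^ (-p) * (t ^ (-p) + p * t) :=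
      mul_le_mul_of_nonneg_left (add_one_le_rpow_neg_add_mul hp ht) (by positivity)
    _ = (x₀ * t) ^ (-p) + x₀ * t * c := by
      rw [mul_rpow hx₀.le ht.le, mul_right_comm, hc]; ring

lemma div_rpow_one_div_add_one_mul {p c : ℝ} (hp : 0 < p) (hc : 0 < c) :
    (p / c) ^ (1 / (p + 1)) * c = p * ((p / c) ^ (1 / (p + 1))) ^ (-p) := by
  set x₀ := (p / c) ^ (1 / (p + 1))
  have hx₀ : 0 < x₀ := by positivity
  have hpow : x₀ ^ p * x₀ = p / c := by
    rw [← rpow_add_one hx₀.ne', ← rpow_mul (by positivity), one_div,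
      inv_mul_cancel₀ (by positivity), rpow_one]
  rw [rpow_neg hx₀.le]
  field_simp
  rw [show x₀ * c * x₀ ^ p = x₀ ^ p * x₀ * c by ring, hpow]
  field_simp

lemma div_rpow_eq_rpow_one_div_add_one {p c : ℝ} (hp : 0 < p) (hc : 0 < c) :
    (c / p) ^ (p / (p + 1)) = ((p / c) ^ (1 / (p + 1))) ^ (-p) ∧
    (c / p) ^ (-(1 / (p + 1))) = (p / c) ^ (1 / (p + 1)) := by
  have hcp : c / p = (p / c)⁻¹ := (inv_div p c).symm
  have hpc : 0 ≤ p / c := by positivity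
  refine ⟨?_, ?_⟩
  · rw [hcp, inv_rpow hpc, ← rpow_mul hpc, ← rpow_neg hpc]
    congr 1; ring
  · rw [hcp, inv_rpow hpc, rpow_neg hpc, inv_inv]

/-- Exponential radial supersolution on the critical line `p + q = m − 1`
with `p > 0` (proof of Theorem 1.5 (E), case `p > 0`). -/
theorem radial_supersolution_critical_line_pos
    (m p q ι η : ℝ)
    (hm : 1 < m) (hp : 0 < p) (hq : q = m - 1 - p)
    (hι : 0 < ι) (hη : 0 < η)
    (S u : ℝ → ℝ)
    (hS : ∀ r : ℝ, S r = ι * Real.exp (ι * r))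
    (hu : ∀ r : ℝ, u r = Real.exp (-η * r)) :
    -- the radial inequality holds everywhere iff ι ≥ η^{-p} + η (m-1)
    ((∀ r : ℝ,
        DifferentiableAt ℝ (fun t => S t * |deriv u t| ^ (m - 2) * deriv u t) r ∧
        deriv (fun t => S t * |deriv u t| ^ (m - 2) * deriv u t) r
          + S r * u r ^ p * |deriv u r| ^ q ≤ 0) ↔
      η ^ (-p) + η * (m - 1) ≤ ι) ∧
    -- the function η' ↦ η'^{-p} + η'(m-1) is minimized at (p/(m-1))^{1/(p+1)}
    (∀ η' : ℝ, 0 < η' →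
      ((p / (m - 1)) ^ (1 / (p + 1))) ^ (-p)
          + ((p / (m - 1)) ^ (1 / (p + 1))) * (m - 1)
        ≤ η' ^ (-p) + η' * (m - 1)) ∧
    -- the minimal value is H(p)
    (((p / (m - 1)) ^ (1 / (p + 1))) ^ (-p)
        + ((p / (m - 1)) ^ (1 / (p + 1))) * (m - 1)
      = ((m - 1) / p) ^ (p / (p + 1))
        + (m - 1) * ((m - 1) / p) ^ (-(1 / (p + 1)))) ∧
    -- in particular, if ι ≥ H(p) a suitable η' exists
    (((m - 1) / p) ^ (p / (p + 1))
        + (m - 1) * ((m - 1) / p) ^ (-(1 / (p + 1))) ≤ ι →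
      ∃ η' : ℝ, 0 < η' ∧ η' ^ (-p) + η' * (m - 1) ≤ ι) := by
  have hm1 : 0 < m - 1 := by linarith
  have hx₀ : 0 < (p / (m - 1)) ^ (1 / (p + 1)) := by positivity
  obtain ⟨hH₁, hH₂⟩ := div_rpow_eq_rpow_one_div_add_one hp hm1
  refine ⟨radial_inequality_iff_of_eq_exp hι hη hq hS hu,
    fun η' hη' => rpow_neg_add_mul_le_of_mul_eq hp hx₀ hη' (div_rpow_one_div_add_one_mul hp hm1),
    by rw [hH₁, hH₂, mul_comm], fun hH => ⟨_, hx₀, ?_⟩⟩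
  rwa [hH₁, hH₂, mul_comm (m - 1)] at hH
end

section
/- (Radial supersolution near infinity for exponential weight, region G_4; proof of Theorem 1.5 (D)) Let m > 1, p < 0, q = m − 1, λ > 0, and fix η with 0 < η < 1. Define S(r) = e^{λ r} and u(r) = λ^{1/p} + r^{−η} for r > 0. Then there exists R₀ > 0 such that for all r ≥ R₀, the radial inequality (S·|u'|^{m−2}·u')'(r) + S(r)·u(r)^p·|u'(r)|^{m−1} ≤ 0 holds. -/
open Real Filter Topology

/-!
With `a = λ ^ (1 / p)` and `β = (η + 1)(m - 1)`, the derivative `u' = -η r ^ (-η - 1)` is negative,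
so the flux is explicit: `S |u'| ^ (m - 2) u' = -η ^ (m - 1) e ^ (λ r) r ^ (-β)`. Differentiating,
the left-hand side of the inequality equals `η ^ (m - 1) e ^ (λ r) r ^ (-β) (u ^ p + β / r - λ)`.
Since `a ^ p = λ` and `x ↦ x ^ p` is decreasing with derivative bounded away from `0` near `a`,
`u ^ p ≤ λ - c r ^ (-η)` for some `c > 0`, and `c r ^ (-η)` dominates `β / r` because `η < 1`.
-/

/- The slope of `x ↦ x ^ p` on `[a, a + ε]` is a value of its derivative `p x ^ (p - 1)`, which is
increasing for `p < 0` and hence at most its value at `2a ≥ a + ε`. -/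
lemma rpow_add_le_of_neg {a ε p : ℝ} (ha : 0 < a) (hε : 0 < ε) (hεa : ε ≤ a) (hp : p < 0) :
    (a + ε) ^ p ≤ a ^ p + p * (2 * a) ^ (p - 1) * ε := by
  obtain ⟨ξ, ⟨haξ, hξ⟩, hslope⟩ := exists_hasDerivAt_eq_slope (fun x : ℝ => x ^ p)
    (fun x => p * x ^ (p - 1)) (lt_add_of_pos_right a hε)
    (fun x hx => (hasDerivAt_rpow_const (Or.inl (ha.trans_le hx.1).ne')).continuousAt
      |>.continuousWithinAt)
    (fun x hx => hasDerivAt_rpow_const (Or.inl (ha.trans hx.1).ne'))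
  have hξ0 : 0 < ξ := ha.trans haξ
  have hderiv : p * ξ ^ (p - 1) ≤ p * (2 * a) ^ (p - 1) :=
    mul_le_mul_of_nonpos_left (rpow_le_rpow_of_nonpos hξ0 (by linarith) (by linarith)) hp.le
  rw [add_sub_cancel_left, eq_div_iff hε.ne'] at hslope
  nlinarith [mul_le_mul_of_nonneg_right hderiv hε.le]

lemma eventually_rpow_add_rpow_neg_add_div_le {a p η : ℝ} (ha : 0 < a) (hp : p < 0)
    (hη : 0 < η) (hη1 : η < 1) (β : ℝ) :
    ∀ᶠ r : ℝ in atTop, (a + r ^ (-η)) ^ p + β / r ≤ a ^ p := by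
  set K := -p * (2 * a) ^ (p - 1)
  have hK : 0 < K := mul_pos (neg_pos.mpr hp) (rpow_pos_of_pos (by linarith) _)
  filter_upwards [eventually_gt_atTop 0, (tendsto_rpow_neg_atTop hη).eventually_le_const ha,
    ((tendsto_rpow_atTop (sub_pos.mpr hη1)).const_mul_atTop hK).eventually_ge_atTop β]
    with r hr hsmall hlarge
  have hpow : (a + r ^ (-η)) ^ p ≤ a ^ p - K * r ^ (-η) := by
    have := rpow_add_le_of_neg ha (rpow_pos_of_pos hr _) hsmall hp
    linarith
  have hdiv : β / r ≤ K * r ^ (-η) := by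
    rw [div_le_iff₀ hr, mul_assoc, ← rpow_add_one hr.ne']
    convert hlarge using 3
    ring
  linarith

lemma abs_rpow_sub_two_mul_of_neg {x : ℝ} (hx : x < 0) (k : ℝ) :
    |x| ^ (k - 2) * x = -|x| ^ (k - 1) := by
  have hpow : (-x) ^ (k - 1) = (-x) ^ (k - 2) * (-x) := by
    rw [← rpow_add_one (neg_ne_zero.mpr hx.ne)]
    ring_nf
  rw [abs_of_neg hx, hpow]
  ring

lemma hasDerivAt_const_mul_exp_mul_rpow (c lam β : ℝ) {t : ℝ} (ht : 0 < t) :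
    HasDerivAt (fun s => c * (exp (lam * s) * s ^ (-β)))
      (c * (exp (lam * t) * t ^ (-β)) * (lam - β / t)) t := by
  have hexp : HasDerivAt (fun s => exp (lam * s)) (exp (lam * t) * lam) t := by
    simpa using ((hasDerivAt_id t).const_mul lam).exp
  refine ((hexp.mul (hasDerivAt_rpow_const (p := -β) (Or.inl ht.ne'))).const_mul c).congr_deriv ?_
  rw [rpow_sub ht, rpow_one]
  field_simp
  ring

section Profile

variable {u : ℝ → ℝ} {a η : ℝ}

lemma deriv_eq_of_eqOn_const_add_rpow_neg (hu : ∀ r, 0 < r → u r = a + r ^ (-η)) {t : ℝ}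
    (ht : 0 < t) : deriv u t = -(η * t ^ (-η - 1)) := by
  have hloc : u =ᶠ[𝓝 t] fun s => a + s ^ (-η) := eventually_of_mem (Ioi_mem_nhds ht) hu
  rw [hloc.deriv_eq, ((hasDerivAt_rpow_const (Or.inl ht.ne')).const_add a).deriv]
  ring

lemma abs_deriv_rpow_eq_of_eqOn_const_add_rpow_neg (hu : ∀ r, 0 < r → u r = a + r ^ (-η))
    (hη : 0 ≤ η) {t : ℝ} (ht : 0 < t) (k : ℝ) :
    |deriv u t| ^ k = η ^ k * t ^ (-((η + 1) * k)) := by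
  rw [deriv_eq_of_eqOn_const_add_rpow_neg hu ht, abs_neg, abs_of_nonneg (by positivity),
    mul_rpow hη (by positivity), ← rpow_mul ht.le]
  ring_nf

lemma flux_eq_of_exp_weight {S : ℝ → ℝ} {lam : ℝ} (hS : ∀ r, 0 < r → S r = exp (lam * r))
    (hu : ∀ r, 0 < r → u r = a + r ^ (-η)) (hη : 0 < η) (m : ℝ) {t : ℝ} (ht : 0 < t) :
    S t * |deriv u t| ^ (m - 2) * deriv u t
      = -η ^ (m - 1) * (exp (lam * t) * t ^ (-((η + 1) * (m - 1)))) := by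
  have hneg : deriv u t < 0 := by
    rw [deriv_eq_of_eqOn_const_add_rpow_neg hu ht]
    exact neg_neg_of_pos (by positivity)
  rw [mul_assoc, abs_rpow_sub_two_mul_of_neg hneg,
    abs_deriv_rpow_eq_of_eqOn_const_add_rpow_neg hu hη.le ht, hS t ht]
  ring

end Profile

theorem radial_supersolution_near_infinity_G4_general
    (m p lam η : ℝ)
    (hp : p < 0) (hlam : 0 < lam)
    (hη1 : 0 < η) (hη2 : η < 1)
    (S u : ℝ → ℝ)
    (hS : ∀ r : ℝ, 0 < r → S r = Real.exp (lam * r))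
    (hu : ∀ r : ℝ, 0 < r → u r = lam ^ (1 / p) + r ^ (-η)) :
    ∃ R₀ : ℝ, 0 < R₀ ∧ ∀ r : ℝ, R₀ ≤ r →
      DifferentiableAt ℝ (fun t => S t * |deriv u t| ^ (m - 2) * deriv u t) r ∧
      deriv (fun t => S t * |deriv u t| ^ (m - 2) * deriv u t) r
        + S r * u r ^ p * |deriv u r| ^ (m - 1) ≤ 0 := by
  set a := lam ^ (1 / p)
  have ha : 0 < a := rpow_pos_of_pos hlam _
  have hap : a ^ p = lam := by rw [← rpow_mul hlam.le, one_div_mul_cancel hp.ne, rpow_one]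
  set β := (η + 1) * (m - 1)
  obtain ⟨R, hR⟩ := eventually_atTop.mp ((eventually_gt_atTop 0).and
    (eventually_rpow_add_rpow_neg_add_div_le ha hp hη1 hη2 β))
  refine ⟨max R 1, by positivity, fun r hr => ?_⟩
  obtain ⟨hr, hkey⟩ := hR r (le_of_max_le_left hr)
  have hflux : HasDerivAt (fun t => S t * |deriv u t| ^ (m - 2) * deriv u t)
      (-η ^ (m - 1) * (exp (lam * r) * r ^ (-β)) * (lam - β / r)) r :=
    (hasDerivAt_const_mul_exp_mul_rpow _ lam β hr).congr_of_eventuallyEq <|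
      eventually_of_mem (Ioi_mem_nhds hr) fun t ht => flux_eq_of_exp_weight hS hu hη1 m ht
  refine ⟨hflux.differentiableAt, ?_⟩
  rw [hflux.deriv, hS r hr, hu r hr, abs_deriv_rpow_eq_of_eqOn_const_add_rpow_neg hu hη1.le hr]
  have hpos : 0 ≤ η ^ (m - 1) * exp (lam * r) * r ^ (-β) := by positivity
  calc _ = η ^ (m - 1) * exp (lam * r) * r ^ (-β) * ((a + r ^ (-η)) ^ p + β / r - lam) := by ring
    _ ≤ 0 := mul_nonpos_of_nonneg_of_nonpos hpos (by linarith)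

/-- Radial supersolution near infinity for an exponential weight, region `G₄`
(proof of Theorem 1.5 (D)). -/
theorem radial_supersolution_near_infinity_G4
    (m p q lam η : ℝ)
    (hm : 1 < m) (hp : p < 0) (hq : q = m - 1) (hlam : 0 < lam)
    (hη1 : 0 < η) (hη2 : η < 1)
    (S u : ℝ → ℝ)
    (hS : ∀ r : ℝ, 0 < r → S r = Real.exp (lam * r))
    (hu : ∀ r : ℝ, 0 < r → u r = lam ^ (1 / p) + r ^ (-η)) :
    ∃ R₀ : ℝ, 0 < R₀ ∧ ∀ r : ℝ, R₀ ≤ r →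
      DifferentiableAt ℝ (fun t => S t * |deriv u t| ^ (m - 2) * deriv u t) r ∧
      deriv (fun t => S t * |deriv u t| ^ (m - 2) * deriv u t) r
        + S r * u r ^ p * |deriv u r| ^ (m - 1) ≤ 0 :=
  radial_supersolution_near_infinity_G4_general m p lam η hp hlam hη1 hη2 S u hS hu
end
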